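/- There exists a universal constant K0 > 0 such that in the Bernoulli model setup with θ ≠ 0, if ε/τ < min_{j : θ(j) > 0} θ(j), then the sequence s_n = 2Wτ Σ_{j : θ(j) > 0} θ(j) φ(τ√n/√(1 − τ²); ε/(θ(j)τ)) is strictly increasing on the range of integers n with n < (1/τ² − 1) · max{3/2, 2 min_{j : θ(j) > 0} log(1/(1 − ε/(θ(j)τ)))}, and strictly decreasing on the range of integers n with n ≥ (1/τ² − 1) · (K0 + 2 max_{j : θ(j) > 0} log(1/(1 − ε/(θ(j)τ)))). -/

import Mathlib

open Real Finset MeasureTheory ProbabilityTheory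

/-- The CDF of the standard normal distribution. -/
noncomputable def stdNormalCDF (x : ℝ) : ℝ := cdf (gaussianReal 0 1) x

/-- `phi δ x = 2Φ(x) − Φ(x(1+δ)) − Φ(x(1−δ))`. -/
noncomputable def phi (δ x : ℝ) : ℝ :=
  2 * stdNormalCDF x - stdNormalCDF (x * (1 + δ)) - stdNormalCDF (x * (1 - δ))

/-- The strip center `s_n = 2Wτ Σ_{j : θ(j) > 0} θ(j) φ(τ√n/√(1−τ²); ε/(θ(j)τ))`. -/
noncomputable def berStrip (d : ℕ) (W ε : ℝ) (θ : Fin d → ℝ) (τ : ℝ) (n : ℕ) : ℝ :=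
  2 * W * τ * ∑ j ∈ Finset.univ.filter (fun j => 0 < θ j),
    θ j * phi (ε / (θ j * τ)) (τ * Real.sqrt n / Real.sqrt (1 - τ ^ 2))

/-!
Put `x_n = √(n / (1/τ² - 1))`, so that the `j`-th summand of `s_n` is `θ(j) φ(x_n; δ_j)` with
`δ_j = ε/(θ(j)τ) ∈ (0, 1)`. Differentiating, `φ'(x; δ) = pdf(x) (2 - H_δ(x²δ/2))` where
`H_δ(t) = (1+δ)e^{-(2+δ)t} + (1-δ)e^{(2-δ)t}`. Now `H_δ` is strictly convex with `H_δ(0) = 2`,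
so it stays below `2` before any point where it is `≤ 2`, and above `2` after any positive point
where it is `> 2`. Elementary exponential estimates show that `t = (δ/2) max(3/2, 2 log(1/(1-δ)))`
is a point of the first kind and `t = δ (11 + log(1/(1-δ)))` one of the second, whence `K0 = 22`.
-/

lemma stdNormalCDF_eq_integral (x : ℝ) :
    stdNormalCDF x = ∫ t in Set.Iic x, gaussianPDFReal 0 1 t := by
  rw [stdNormalCDF, cdf_eq_real, measureReal_def,
    gaussianReal_apply_eq_integral 0 one_ne_zero (Set.Iic x), ENNReal.toReal_ofReal]
  exact setIntegral_nonneg measurableSet_Iic fun t _ => gaussianPDFReal_nonneg 0 1 t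

lemma hasDerivAt_stdNormalCDF (x : ℝ) :
    HasDerivAt stdNormalCDF (gaussianPDFReal 0 1 x) x := by
  have hint := integrable_gaussianPDFReal 0 1
  have hcont : Continuous (gaussianPDFReal 0 1) := by
    unfold gaussianPDFReal
    fun_prop
  have hFTC : stdNormalCDF =
      fun y => (∫ t in (0 : ℝ)..y, gaussianPDFReal 0 1 t) + stdNormalCDF 0 := by
    funext y
    rw [← intervalIntegral.integral_Iic_sub_Iic hint.integrableOn hint.integrableOn,
      ← stdNormalCDF_eq_integral, ← stdNormalCDF_eq_integral, sub_add_cancel]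
  rw [hFTC]
  exact (intervalIntegral.integral_hasDerivAt_right hint.intervalIntegrable
    (hcont.stronglyMeasurableAtFilter _ _) hcont.continuousAt).add_const _

lemma exp_neg_le_one_sub_add_sq_div_two {a : ℝ} (ha : 0 ≤ a) : exp (-a) ≤ 1 - a + a ^ 2 / 2 := by
  have hpos : 0 < 1 - a + a ^ 2 / 2 := by nlinarith [sq_nonneg (a - 1)]
  rw [exp_neg, inv_le_iff_one_le_mul₀ (exp_pos a)]
  nlinarith [quadratic_le_exp_of_nonneg ha, sq_nonneg a]

lemma exp_le_one_add_add_sq {b : ℝ} (hb₀ : 0 ≤ b) (hb₁ : b ≤ 1) :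
    exp b ≤ 1 + b + 3 / 4 * b ^ 2 := by
  have h := exp_bound' hb₀ hb₁ (n := 2) two_pos
  norm_num [Finset.sum_range_succ] at h
  linarith

noncomputable def phiH (δ t : ℝ) : ℝ :=
  (1 + δ) * exp (-(2 + δ) * t) + (1 - δ) * exp ((2 - δ) * t)

lemma phiH_zero (δ : ℝ) : phiH δ 0 = 2 := by
  simp only [phiH, mul_zero, exp_zero]
  ring

section phiH

variable {δ : ℝ}

lemma strictConvexOn_phiH (hδ₀ : -1 < δ) (hδ₁ : δ < 1) : StrictConvexOn ℝ Set.univ (phiH δ) := by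
  refine ⟨convex_univ, fun x _ y _ hxy a b ha hb hab => ?_⟩
  have hexp : ∀ c : ℝ, c ≠ 0 → exp (c * (a * x + b * y)) < a * exp (c * x) + b * exp (c * y) :=
    fun c hc => by
      simpa only [smul_eq_mul, mul_add, mul_left_comm c] using
        strictConvexOn_exp.2 (Set.mem_univ (c * x)) (Set.mem_univ (c * y))
          (fun h => hxy (mul_left_cancel₀ hc h)) ha hb hab
  have h₁ := mul_lt_mul_of_pos_left (hexp (-(2 + δ)) (by linarith)) (by linarith : 0 < 1 + δ)
  have h₂ := mul_lt_mul_of_pos_left (hexp (2 - δ) (by linarith)) (by linarith : 0 < 1 - δ)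
  simp only [phiH, smul_eq_mul]
  linarith

lemma phiH_le_two_of_le_three_quarters (hδ₀ : 0 ≤ δ) (hδ₁ : δ ≤ 3 / 4) :
    phiH δ (3 * δ / 4) ≤ 2 := by
  set a := (2 + δ) * (3 * δ / 4)
  set b := (2 - δ) * (3 * δ / 4) with hb_def
  have ha := exp_neg_le_one_sub_add_sq_div_two (a := a) (by positivity)
  have hb := exp_le_one_add_add_sq (b := b) (by rw [hb_def]; nlinarith) (by rw [hb_def]; nlinarith)
  have h₁ := mul_le_mul_of_nonneg_left ha (by linarith : 0 ≤ 1 + δ)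
  have h₂ := mul_le_mul_of_nonneg_left hb (by linarith : 0 ≤ 1 - δ)
  have hpoly : (1 + δ) * (1 - a + a ^ 2 / 2) + (1 - δ) * (1 + b + 3 / 4 * b ^ 2) ≤ 2 := by
    simp only [a, b]
    nlinarith [mul_nonneg hδ₀ (sub_nonneg.2 hδ₁),
      mul_nonneg (mul_nonneg hδ₀ hδ₀) (sub_nonneg.2 hδ₁)]
  simp only [phiH, neg_mul]
  linarith

lemma phiH_mul_le_two (hδ₀ : 0 ≤ δ) {L : ℝ} (hL : 1 - δ = exp (-L))
    (hL₀ : 1 / 2 ≤ L) : phiH δ (δ * L) ≤ 2 := by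
  have h₁ : (1 + δ) * exp (-(2 + δ) * (δ * L)) ≤ 1 := by
    calc (1 + δ) * exp (-(2 + δ) * (δ * L)) ≤ exp δ * exp (-(2 + δ) * (δ * L)) := by
          gcongr; linarith [add_one_le_exp δ]
      _ = exp (-(δ * ((2 + δ) * L - 1))) := by rw [← exp_add]; ring_nf
      _ ≤ 1 := exp_le_one_iff.2 <| neg_nonpos.2 <| mul_nonneg hδ₀ (by nlinarith)
  have h₂ : (1 - δ) * exp ((2 - δ) * (δ * L)) ≤ 1 := by
    rw [hL, ← exp_add, exp_le_one_iff]
    nlinarith [sq_nonneg (1 - δ)]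
  rw [phiH]
  linarith

lemma two_lt_phiH_of_le_half (hδ₀ : 0 < δ) (hδ₁ : δ ≤ 1 / 2) {T : ℝ} (hT : 11 * δ ≤ T) :
    2 < phiH δ T := by
  have hT₀ : 0 < T := by linarith
  have ha : 1 - (2 + δ) * T ≤ exp (-(2 + δ) * T) := by
    linarith [add_one_le_exp (-(2 + δ) * T)]
  have hb := quadratic_le_exp_of_nonneg (x := (2 - δ) * T) (by nlinarith)
  have h₁ := mul_le_mul_of_nonneg_left ha (by linarith : 0 ≤ 1 + δ)
  have h₂ := mul_le_mul_of_nonneg_left hb (by linarith : 0 ≤ 1 - δ)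
  -- the linear terms cancel up to `-6δT`, which the quadratic term `(1-δ)(2-δ)²T²/2` beats
  have hcoeff : 9 / 8 ≤ (1 - δ) * (2 - δ) ^ 2 := by nlinarith
  have hquad : 12 * δ < (1 - δ) * (2 - δ) ^ 2 * T := by
    nlinarith [mul_le_mul_of_nonneg_right hcoeff hT₀.le]
  rw [phiH]
  nlinarith

lemma two_lt_phiH_of_half_le (hδ : 1 / 2 ≤ δ) {L : ℝ} (hL : 1 - δ = exp (-L)) :
    2 < phiH δ (δ * (11 + L)) := by
  have hLδ : L * (1 - δ) ≤ δ := by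
    have h := mul_le_mul_of_nonneg_right (add_one_le_exp L) (exp_pos (-L)).le
    rw [← exp_add, add_neg_cancel, exp_zero] at h
    rw [hL]
    linarith
  have hδ₁ : δ < 1 := by linarith [exp_pos (-L)]
  have h₂ : 2 < (1 - δ) * exp ((2 - δ) * (δ * (11 + L))) := by
    rw [hL, ← exp_add]
    calc (2 : ℝ) < 1 + (-L + (2 - δ) * (δ * (11 + L))) := by
          nlinarith [mul_le_mul_of_nonneg_right hLδ (by linarith : (0 : ℝ) ≤ 1 - δ)]
      _ ≤ exp (-L + (2 - δ) * (δ * (11 + L))) := by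
          linarith [add_one_le_exp (-L + (2 - δ) * (δ * (11 + L)))]
  rw [phiH]
  nlinarith [exp_pos (-(2 + δ) * (δ * (11 + L)))]

lemma one_sub_eq_exp_neg_log (hδ : δ < 1) : 1 - δ = exp (-log (1 / (1 - δ))) := by
  rw [one_div, log_inv, neg_neg, exp_log (by linarith)]

lemma phiH_lt_two (hδ₀ : 0 < δ) (hδ₁ : δ < 1) {t : ℝ} (ht₀ : 0 < t)
    (ht : t < δ / 2 * max (3 / 2) (2 * log (1 / (1 - δ)))) : phiH δ t < 2 := by
  set L := log (1 / (1 - δ))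
  have hL : 1 - δ = exp (-L) := one_sub_eq_exp_neg_log hδ₁
  have hend : phiH δ (δ / 2 * max (3 / 2) (2 * L)) ≤ 2 := by
    rcases le_total (2 * L) (3 / 2) with hsmall | hlarge
    · rw [max_eq_left hsmall, show δ / 2 * (3 / 2) = 3 * δ / 4 by ring]
      exact phiH_le_two_of_le_three_quarters hδ₀.le (by linarith [add_one_le_exp (-L)])
    · rw [max_eq_right hlarge, show δ / 2 * (2 * L) = δ * L by ring]
      exact phiH_mul_le_two hδ₀.le hL (by linarith)
  have h := (strictConvexOn_phiH (by linarith) hδ₁).lt_on_openSegment (Set.mem_univ 0)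
    (Set.mem_univ (δ / 2 * max (3 / 2) (2 * L))) (ht₀.trans ht).ne
    (by rw [openSegment_eq_Ioo (ht₀.trans ht)]; exact ⟨ht₀, ht⟩)
  rwa [phiH_zero, max_eq_left hend] at h

lemma two_lt_phiH (hδ₀ : 0 < δ) (hδ₁ : δ < 1) {t : ℝ}
    (ht : δ * (11 + log (1 / (1 - δ))) ≤ t) : 2 < phiH δ t := by
  set L := log (1 / (1 - δ))
  have hL : 1 - δ = exp (-L) := one_sub_eq_exp_neg_log hδ₁
  have hL₀ : 0 ≤ L := by
    have : exp (-L) ≤ 1 := by rw [← hL]; linarith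
    linarith [exp_le_one_iff.1 this]
  have hT : 2 < phiH δ (δ * (11 + L)) := by
    rcases le_total δ (1 / 2) with hsmall | hlarge
    · exact two_lt_phiH_of_le_half hδ₀ hsmall (by nlinarith)
    · exact two_lt_phiH_of_half_le hlarge hL
  rcases ht.eq_or_lt with rfl | hlt
  · exact hT
  refine lt_trans hT ((strictConvexOn_phiH (by linarith) hδ₁).convexOn.lt_right_of_left_lt
    (Set.mem_univ 0) (Set.mem_univ t) ?_ ?_)
  · have hT₀ : 0 < δ * (11 + L) := by positivity
    rw [openSegment_eq_Ioo (hT₀.trans hlt)]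
    exact ⟨hT₀, hlt⟩
  · rwa [phiH_zero]

end phiH

lemma hasDerivAt_phi (δ x : ℝ) :
    HasDerivAt (phi δ) (gaussianPDFReal 0 1 x * (2 - phiH δ (x ^ 2 * δ / 2))) x := by
  have h : HasDerivAt (phi δ) (2 * gaussianPDFReal 0 1 x
      - gaussianPDFReal 0 1 (x * (1 + δ)) * (1 + δ)
      - gaussianPDFReal 0 1 (x * (1 + -δ)) * (1 + -δ)) x := by
    simp only [← sub_eq_add_neg]
    exact (((hasDerivAt_stdNormalCDF x).const_mul 2).sub
      ((hasDerivAt_stdNormalCDF (x * (1 + δ))).comp x (hasDerivAt_mul_const (1 + δ)))).sub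
      ((hasDerivAt_stdNormalCDF (x * (1 - δ))).comp x (hasDerivAt_mul_const (1 - δ)))
  refine h.congr_deriv ?_
  have hscale : ∀ c : ℝ, gaussianPDFReal 0 1 (x * (1 + c)) =
      gaussianPDFReal 0 1 x * exp (-(2 + c) * (x ^ 2 * c / 2)) := fun c => by
    simp only [gaussianPDFReal, NNReal.coe_one, mul_assoc, ← exp_add]
    ring_nf
  rw [hscale, hscale, phiH]
  ring_nf

lemma continuous_phi (δ : ℝ) : Continuous (phi δ) :=
  continuous_iff_continuousAt.2 fun x => (hasDerivAt_phi δ x).continuousAt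

section phi

variable {δ : ℝ}

lemma strictMonoOn_phi (hδ₀ : 0 < δ) (hδ₁ : δ < 1) :
    StrictMonoOn (phi δ) (Set.Icc 0 √(max (3 / 2) (2 * log (1 / (1 - δ))))) := by
  refine strictMonoOn_of_deriv_pos (convex_Icc _ _) (continuous_phi δ).continuousOn fun z hz => ?_
  rw [interior_Icc] at hz
  have hz₂ : z ^ 2 < max (3 / 2) (2 * log (1 / (1 - δ))) := (lt_sqrt hz.1.le).1 hz.2
  rw [(hasDerivAt_phi δ z).deriv]
  exact mul_pos (gaussianPDFReal_pos 0 1 z one_ne_zero)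
    (sub_pos.2 (phiH_lt_two hδ₀ hδ₁ (by have := hz.1; positivity) (by nlinarith)))

lemma strictAntiOn_phi (hδ₀ : 0 < δ) (hδ₁ : δ < 1) :
    StrictAntiOn (phi δ) (Set.Ici √(22 + 2 * log (1 / (1 - δ)))) := by
  refine strictAntiOn_of_deriv_neg (convex_Ici _) (continuous_phi δ).continuousOn fun z hz => ?_
  rw [interior_Ici, Set.mem_Ioi] at hz
  have hz₂ : 22 + 2 * log (1 / (1 - δ)) < z ^ 2 :=
    (sqrt_lt' ((sqrt_nonneg _).trans_lt hz)).1 hz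
  rw [(hasDerivAt_phi δ z).deriv]
  exact mul_neg_of_pos_of_neg (gaussianPDFReal_pos 0 1 z one_ne_zero)
    (sub_neg.2 (two_lt_phiH hδ₀ hδ₁ (by nlinarith)))

end phi

lemma mul_sqrt_div_sqrt_one_sub_sq {τ : ℝ} (hτ₀ : 0 < τ) (hτ₁ : τ < 1) (x : ℝ) :
    τ * √x / √(1 - τ ^ 2) = √(x / (1 / τ ^ 2 - 1)) := by
  have h : x / (1 / τ ^ 2 - 1) = τ ^ 2 * x / (1 - τ ^ 2) := by
    field_simp
  rw [h, sqrt_div' _ (by nlinarith), sqrt_mul (sq_nonneg τ), sqrt_sq hτ₀.le]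

lemma berStrip_lt_berStrip {d : ℕ} {W ε τ : ℝ} {θ : Fin d → ℝ} {m n : ℕ} (hW : 0 < W)
    (hτ₀ : 0 < τ) (hτ₁ : τ < 1) (hθ : ∃ j, 0 < θ j)
    (hphi : ∀ j, 0 < θ j → phi (ε / (θ j * τ)) √(m / (1 / τ ^ 2 - 1)) <
      phi (ε / (θ j * τ)) √(n / (1 / τ ^ 2 - 1))) :
    berStrip d W ε θ τ m < berStrip d W ε θ τ n := by
  obtain ⟨j₀, hj₀⟩ := hθ
  simp only [berStrip, mul_sqrt_div_sqrt_one_sub_sq hτ₀ hτ₁]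
  refine mul_lt_mul_of_pos_left (sum_lt_sum_of_nonempty ⟨j₀, by simpa using hj₀⟩ fun j hj => ?_)
    (by positivity)
  have hj : 0 < θ j := (mem_filter.1 hj).2
  exact mul_lt_mul_of_pos_left (hphi j hj) hj

/-- In the weak adversary regime `ε/τ < min_{j : θ(j) > 0} θ(j)`, there is a universal
constant `K0 > 0` such that `s_n` is strictly increasing when
`n < (1/τ² − 1)·max{3/2, 2 min_{j : θ(j) > 0} log(1/(1 − ε/(θ(j)τ)))}` and strictly
decreasing when `n ≥ (1/τ² − 1)·(K0 + 2 max_{j : θ(j) > 0} log(1/(1 − ε/(θ(j)τ))))`.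
(Since `max(c, min_j x_j) = min_j max(c, x_j)`, the threshold conditions are expressed
equivalently as `∀ j` with `θ(j) > 0`.) -/
theorem berStrip_two_stages :
    ∃ K0 : ℝ, 0 < K0 ∧
      ∀ (d : ℕ) (W ε : ℝ) (θ : Fin d → ℝ) (τ : ℝ),
        0 < W → 0 < ε → (∀ j, 0 ≤ θ j) → τ ∈ Set.Ioo (0 : ℝ) 1 → θ ≠ 0 →
        (∀ j, 0 < θ j → ε / τ < θ j) →
        (∀ m n : ℕ, 1 ≤ m → m < n →
          (∀ j, 0 < θ j →
            (n : ℝ) < (1 / τ ^ 2 - 1)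
              * max (3/2) (2 * Real.log (1 / (1 - ε / (θ j * τ))))) →
          berStrip d W ε θ τ m < berStrip d W ε θ τ n) ∧
        (∀ m n : ℕ, 1 ≤ m → m < n →
          (∀ j, 0 < θ j →
            (1 / τ ^ 2 - 1) * (K0 + 2 * Real.log (1 / (1 - ε / (θ j * τ)))) ≤ (m : ℝ)) →
          berStrip d W ε θ τ n < berStrip d W ε θ τ m) := by
  refine ⟨22, by norm_num, fun d W ε θ τ hW hε hθ ⟨hτ₀, hτ₁⟩ hθne hweak => ?_⟩
  have hc : 0 < 1 / τ ^ 2 - 1 := by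
    rw [sub_pos, lt_div_iff₀ (by positivity)]
    nlinarith
  have hpos : ∃ j, 0 < θ j := by
    obtain ⟨j, hj⟩ := Function.ne_iff.1 hθne
    exact ⟨j, (hθ j).lt_of_ne' hj⟩
  have hδ : ∀ j, 0 < θ j → 0 < ε / (θ j * τ) ∧ ε / (θ j * τ) < 1 := fun j hj =>
    ⟨by positivity, by rw [div_lt_one (by positivity), ← div_lt_iff₀ hτ₀]; exact hweak j hj⟩
  have hsqrt : ∀ {m n : ℕ}, m < n → √(m / (1 / τ ^ 2 - 1)) < √(n / (1 / τ ^ 2 - 1)) :=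
    fun hmn => sqrt_lt_sqrt (by positivity) (div_lt_div_of_pos_right (by exact_mod_cast hmn) hc)
  refine ⟨fun m n _ hmn hn => berStrip_lt_berStrip hW hτ₀ hτ₁ hpos fun j hj => ?_,
    fun m n _ hmn hm => berStrip_lt_berStrip hW hτ₀ hτ₁ hpos fun j hj => ?_⟩
  · have hnM : √(n / (1 / τ ^ 2 - 1)) ≤ √(max (3 / 2) (2 * log (1 / (1 - ε / (θ j * τ))))) :=
      sqrt_le_sqrt ((div_lt_iff₀' hc).2 (hn j hj)).le
    exact strictMonoOn_phi (hδ j hj).1 (hδ j hj).2 ⟨sqrt_nonneg _, (hsqrt hmn).le.trans hnM⟩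
      ⟨sqrt_nonneg _, hnM⟩ (hsqrt hmn)
  · have hKm : √(22 + 2 * log (1 / (1 - ε / (θ j * τ)))) ≤ √(m / (1 / τ ^ 2 - 1)) :=
      sqrt_le_sqrt ((le_div_iff₀' hc).2 (hm j hj))
    exact strictAntiOn_phi (hδ j hj).1 (hδ j hj).2 hKm (hKm.trans (hsqrt hmn).le) (hsqrt hmn)
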